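/- Let λ ∈ ℝ and l = −1/2 + iλ. The linear span of the family {e_m^l : m ∈ ℤ}, regarded as elements of L²(ℝ, ℂ), is dense in L²(ℝ, ℂ). Equivalently, if f ∈ L²(ℝ, ℂ) satisfies ∫_ℝ f(x) · conj(e_m^l(x)) dx = 0 for every m ∈ ℤ, then f = 0 almost everywhere. -/

import Mathlib

/-!
Multiplying `f` by the weight `w(x) = (1+x²)^(-1/2 - iλ)`, which lies in `L²`, gives an integrable
function `h = f w`, and the orthogonality relations say exactly that `h` integrates to zero against
every power `c^m`, `m ∈ ℤ`, of the Cayley transform `c(x) = (x+i)/(x-i)`. The map `c` extends to an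
injective continuous map from the one-point compactification of `ℝ` to the circle, so by
Stone–Weierstrass the span of its powers is dense in `C(OnePoint ℝ, ℂ)`. Hence `h` integrates to
zero against every compactly supported smooth function, so `h = 0` a.e.; since `w` never vanishes,
`f = 0` a.e.
-/

open MeasureTheory
open scoped ComplexConjugate

/-- The elliptic basis functions `e_m^l(x) = π^{-1/2} ((x-i)/(x+i))^m (1+x²)^l`
for `l = -1/2 + iλ`. -/
noncomputable def ellipticBasis (lam : ℝ) (m : ℤ) (x : ℝ) : ℂ :=
  (Real.pi : ℂ) ^ (-(1/2) : ℂ) * (((x : ℂ) - Complex.I) / ((x : ℂ) + Complex.I)) ^ m *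
    ((1 + x ^ 2 : ℝ) : ℂ) ^ (-(1/2) + Complex.I * lam : ℂ)

open Complex Filter Topology Set Submodule

namespace ContinuousMap

variable {X : Type*} [TopologicalSpace X]

noncomputable def circleZPow (u : C(X, Circle)) (m : ℤ) : C(X, ℂ) :=
  ⟨fun x => ((u x ^ m : Circle) : ℂ), continuous_induced_dom.comp (by fun_prop)⟩

variable (u : C(X, Circle))

@[simp]
lemma circleZPow_apply (m : ℤ) (x : X) : circleZPow u m x = (u x : ℂ) ^ m := rfl

lemma circleZPow_add (m n : ℤ) : circleZPow u (m + n) = circleZPow u m * circleZPow u n := by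
  ext x; simp [zpow_add₀ (Circle.coe_ne_zero _)]

lemma circleZPow_zero : circleZPow u 0 = 1 := by ext x; simp

lemma star_circleZPow (m : ℤ) : star (circleZPow u m) = circleZPow u (-m) := by
  ext x
  simp only [star_apply, circleZPow, coe_mk, zpow_neg, Circle.coe_inv_eq_conj]
  rfl

noncomputable def circleZPowSubalgebra : StarSubalgebra ℂ C(X, ℂ) where
  toSubalgebra := Algebra.adjoin ℂ (range (circleZPow u))
  star_mem' := by
    change Algebra.adjoin ℂ (range (circleZPow u)) ≤
      star (Algebra.adjoin ℂ (range (circleZPow u)))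
    refine Algebra.adjoin_le ?_
    rintro - ⟨m, rfl⟩
    exact Algebra.subset_adjoin ⟨-m, (star_circleZPow u m).symm⟩

theorem circleZPowSubalgebra_toSubmodule :
    Subalgebra.toSubmodule (circleZPowSubalgebra u).toSubalgebra =
      span ℂ (range (circleZPow u)) := by
  apply Algebra.adjoin_eq_span_of_subset
  refine Subset.trans ?_ subset_span
  intro x hx
  refine Submonoid.closure_induction (fun _ => id) ⟨0, circleZPow_zero u⟩ ?_ hx
  rintro - - - - ⟨m, rfl⟩ ⟨n, rfl⟩
  exact ⟨m + n, circleZPow_add u m n⟩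

theorem span_circleZPow_closure_eq_top [CompactSpace X] (hu : Function.Injective u) :
    (span ℂ (range (circleZPow u))).topologicalClosure = ⊤ := by
  have hsep : (circleZPowSubalgebra u).SeparatesPoints := by
    intro x y hxy
    refine ⟨_, ⟨circleZPow u 1, Algebra.subset_adjoin ⟨1, rfl⟩, rfl⟩, ?_⟩
    simpa using fun h => hxy (hu (Circle.ext h))
  rw [← circleZPowSubalgebra_toSubmodule]
  exact congr_arg (Subalgebra.toSubmodule <| StarSubalgebra.toSubalgebra ·)
    (starSubalgebra_topologicalClosure_eq_top_of_separatesPoints _ hsep)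

end ContinuousMap

section Pairing

variable {α X : Type*} [MeasurableSpace α] [TopologicalSpace α] [OpensMeasurableSpace α]
  {μ : Measure α} [TopologicalSpace X] [CompactSpace X]

lemma integrable_mul_comp_continuousMap {h : α → ℂ} (hh : Integrable h μ) (ι : C(α, X))
    (g : C(X, ℂ)) : Integrable (fun a => h a * g (ι a)) μ :=
  hh.mul_bdd (g.continuous.comp ι.continuous).aestronglyMeasurable
    (Eventually.of_forall fun a => g.norm_coe_le_norm (ι a))

noncomputable def integralMulCompCLM {h : α → ℂ} (hh : Integrable h μ) (ι : C(α, X)) :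
    C(X, ℂ) →L[ℂ] ℂ :=
  LinearMap.mkContinuous
    { toFun g := ∫ a, h a * g (ι a) ∂μ
      map_add' g₁ g₂ := by
        simp only [ContinuousMap.add_apply, mul_add]
        exact integral_add (integrable_mul_comp_continuousMap hh ι g₁)
          (integrable_mul_comp_continuousMap hh ι g₂)
      map_smul' c g := by
        simp only [ContinuousMap.smul_apply, smul_eq_mul, RingHom.id_apply, mul_left_comm _ c]
        exact integral_const_mul c _ }
    (∫ a, ‖h a‖ ∂μ) fun g => by
      calc ‖∫ a, h a * g (ι a) ∂μ‖ ≤ ∫ a, ‖h a‖ * ‖g‖ ∂μ :=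
            norm_integral_le_of_norm_le (hh.norm.mul_const _) (Eventually.of_forall fun a => by
              rw [norm_mul]; gcongr; exact g.norm_coe_le_norm (ι a))
        _ = (∫ a, ‖h a‖ ∂μ) * ‖g‖ := integral_mul_const _ _

theorem integral_mul_comp_eq_zero_of_span {h : α → ℂ} (hh : Integrable h μ) (ι : C(α, X))
    {s : Set C(X, ℂ)} (hs : (span ℂ s).topologicalClosure = ⊤)
    (h0 : ∀ g ∈ s, ∫ a, h a * g (ι a) ∂μ = 0) (g : C(X, ℂ)) :
    ∫ a, h a * g (ι a) ∂μ = 0 := by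
  let L := integralMulCompCLM hh ι
  have hspan : span ℂ s ≤ L.ker := span_le.2 h0
  have : ⊤ ≤ L.ker := hs ▸ topologicalClosure_minimal _ hspan L.isClosed_ker
  exact this trivial

end Pairing

theorem ae_eq_zero_of_integral_mul_onePoint_eq_zero {E : Type*} [NormedAddCommGroup E]
    [NormedSpace ℝ E] [FiniteDimensional ℝ E] [MeasurableSpace E] [BorelSpace E]
    {μ : Measure E} {h : E → ℂ} (hh : LocallyIntegrable h μ)
    (h0 : ∀ g : C(OnePoint E, ℂ), ∫ x, h x * g x ∂μ = 0) : h =ᵐ[μ] 0 := by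
  refine ae_eq_zero_of_integral_contDiff_smul_eq_zero hh fun g _ hgc => ?_
  have hgc' : HasCompactSupport fun x => (g x : ℂ) := hgc.comp_left Complex.ofReal_zero
  let G : C(OnePoint E, ℂ) := OnePoint.continuousMapMk ⟨fun x => (g x : ℂ), by fun_prop⟩ 0
    (by rw [coclosedCompact_eq_cocompact]; exact hgc'.is_zero_at_infty)
  calc ∫ x, g x • h x ∂μ = ∫ x, h x * G x ∂μ := by
        congr 1 with x; exact Complex.real_smul.trans (mul_comm _ _)
    _ = 0 := h0 G

lemma ofReal_sub_I_ne_zero (x : ℝ) : (x : ℂ) - I ≠ 0 := by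
  simp [Complex.ext_iff]

noncomputable def cayley : C(ℝ, Circle) :=
  ⟨fun x => Circle.ofConjDivSelf ((x : ℂ) - I) (ofReal_sub_I_ne_zero x), by
    refine continuous_induced_rng.2 ?_
    change Continuous fun x : ℝ => conj ((x : ℂ) - I) / ((x : ℂ) - I)
    exact (by fun_prop : Continuous _).div (by fun_prop) ofReal_sub_I_ne_zero⟩

lemma coe_cayley (x : ℝ) : (cayley x : ℂ) = (x + I) / (x - I) := by
  change conj ((x : ℂ) - I) / ((x : ℂ) - I) = _
  simp [map_sub, Complex.conj_ofReal]

lemma coe_cayley_sub_one (x : ℝ) : (cayley x : ℂ) - 1 = 2 * I * ((x : ℂ) - I)⁻¹ := by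
  rw [coe_cayley]; field_simp [ofReal_sub_I_ne_zero x]; ring

lemma tendsto_cayley_cocompact : Tendsto cayley (cocompact ℝ) (𝓝 1) := by
  refine tendsto_subtype_rng.2 ?_
  have hofReal : Tendsto (fun x : ℝ => (x : ℂ)) (cocompact ℝ) (Bornology.cobounded ℂ) :=
    Metric.cobounded_eq_cocompact (α := ℝ) ▸ RCLike.tendsto_ofReal_cobounded_cobounded ℂ
  have := ((tendsto_inv₀_cobounded.comp ((tendsto_sub_const_cobounded I).comp hofReal)).const_mul
    (2 * I)).const_add 1
  simp only [mul_zero, add_zero] at this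
  refine this.congr fun x => ?_
  rw [Function.comp_apply, Function.comp_apply, ← coe_cayley_sub_one, add_sub_cancel]

lemma cayley_injective : Function.Injective cayley := by
  intro x y hxy
  have := congrArg (fun z : Circle => (z : ℂ) - 1) hxy
  simp only [coe_cayley_sub_one, mul_right_inj' (by simp : (2 : ℂ) * I ≠ 0), inv_inj,
    sub_left_inj, ofReal_inj] at this
  exact this

lemma cayley_ne_one (x : ℝ) : cayley x ≠ 1 := by
  intro h
  have := congrArg (fun z : Circle => (z : ℂ) - 1) h
  simp [coe_cayley_sub_one, ofReal_sub_I_ne_zero] at this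

noncomputable def cayleyOnePoint : C(OnePoint ℝ, Circle) :=
  OnePoint.continuousMapMk cayley 1
    (coclosedCompact_eq_cocompact (X := ℝ) ▸ tendsto_cayley_cocompact)

@[simp]
lemma cayleyOnePoint_coe (x : ℝ) : cayleyOnePoint x = cayley x := rfl

lemma cayleyOnePoint_injective : Function.Injective cayleyOnePoint := by
  rintro (_ | x) (_ | y) hxy
  · rfl
  · exact absurd hxy.symm (cayley_ne_one y)
  · exact absurd hxy (cayley_ne_one x)
  · exact congrArg _ (cayley_injective hxy)

lemma conj_ofReal_cpow {r : ℝ} (hr : 0 ≤ r) (s : ℂ) :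
    conj ((r : ℂ) ^ s) = (r : ℂ) ^ conj s := by
  have harg : (r : ℂ).arg ≠ Real.pi := by simp [arg_ofReal_of_nonneg hr, Real.pi_ne_zero.symm]
  simpa [conj_ofReal] using (conj_cpow (r : ℂ) (conj s) harg).symm

lemma memLp_two_one_add_sq_cpow {s : ℂ} (hs : s.re = -(1 / 2)) :
    MemLp (fun x : ℝ => ((1 + x ^ 2 : ℝ) : ℂ) ^ s) 2 volume := by
  have hmeas : Measurable fun x : ℝ => ((1 + x ^ 2 : ℝ) : ℂ) ^ s :=
    (by fun_prop : Measurable fun x : ℝ => ((1 + x ^ 2 : ℝ) : ℂ)).pow_const s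
  refine (memLp_two_iff_integrable_sq_norm hmeas.aestronglyMeasurable).2
    (integrable_inv_one_add_sq.congr (Eventually.of_forall fun x => ?_))
  dsimp only
  rw [norm_cpow_eq_rpow_re_of_pos (by positivity), hs, ← Real.rpow_mul_natCast (by positivity)]
  norm_num [Real.rpow_neg_one]

lemma conj_ellipticBasis (lam : ℝ) (m : ℤ) (x : ℝ) :
    conj (ellipticBasis lam m x) =
      (Real.pi : ℂ) ^ (-(1 / 2) : ℂ) *
        ((cayley x : ℂ) ^ m * ((1 + x ^ 2 : ℝ) : ℂ) ^ (-(1 / 2) - I * lam)) := by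
  simp only [ellipticBasis, map_mul, conj_ofReal_cpow Real.pi_pos.le,
    conj_ofReal_cpow (by positivity : (0 : ℝ) ≤ 1 + x ^ 2), map_zpow₀, map_div₀, map_sub,
    map_add, conj_ofReal, conj_I, map_neg, map_one, map_ofNat, sub_neg_eq_add,
    ← sub_eq_add_neg, coe_cayley]
  ring_nf

/-- The linear span of `{e_m^l : m ∈ ℤ}` is dense in `L²(ℝ, ℂ)`:
any `f ∈ L²` orthogonal to all `e_m^l` vanishes almost everywhere. -/
theorem statement5 (lam : ℝ) (f : ℝ → ℂ) (hf : MemLp f 2 (volume : Measure ℝ))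
    (horth : ∀ m : ℤ, (∫ x : ℝ, f x * conj (ellipticBasis lam m x)) = 0) :
    f =ᵐ[(volume : Measure ℝ)] 0 := by
  set w : ℝ → ℂ := fun x => ((1 + x ^ 2 : ℝ) : ℂ) ^ (-(1 / 2) - I * lam)
  have hfw : Integrable (f * w) := hf.integrable_mul (memLp_two_one_add_sq_cpow (by simp))
  let ι : C(ℝ, OnePoint ℝ) := ⟨(↑), OnePoint.continuous_coe⟩
  have hpow (m : ℤ) :
      ∫ x, (f * w) x * ContinuousMap.circleZPow cayleyOnePoint m (ι x) = 0 := by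
    have hc : (Real.pi : ℂ) ^ (-(1 / 2) : ℂ) ≠ 0 := by simp
    refine (mul_eq_zero.1 ?_).resolve_left hc
    rw [← integral_const_mul, ← horth m]
    congr 1 with x
    rw [conj_ellipticBasis]
    simp only [Pi.mul_apply, ContinuousMap.circleZPow_apply, ι, ContinuousMap.coe_mk, cayleyOnePoint_coe, w]
    ring
  have hzero := ae_eq_zero_of_integral_mul_onePoint_eq_zero hfw.locallyIntegrable
    (integral_mul_comp_eq_zero_of_span hfw ι
      (ContinuousMap.span_circleZPow_closure_eq_top _ cayleyOnePoint_injective)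
      (by rintro _ ⟨m, rfl⟩; exact hpow m))
  filter_upwards [hzero] with x hx
  exact (mul_eq_zero.1 hx).resolve_right
    (cpow_ne_zero_iff.2 (.inl (ofReal_ne_zero.2 (by positivity))))
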